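/- Lemma 2.5: Let f : 𝒞₀ → ℝ. Then f is continuous with respect to the sup norm |·|_C on 𝒞₀ if and only if the functional f̂ : Λ → ℝ defined by f̂(t,x) := f(x) is continuous on (Λ, d_∞). -/

import Mathlib

open Filter Topology MeasureTheory Matrix
open scoped RealInnerProductSpace

noncomputable section

namespace PathHJB

/-- The domain `(-∞,0]` of the paths. -/
abbrev PathDom : Type := Set.Iic (0 : ℝ)

abbrev Eucl (d : ℕ) := EuclideanSpace ℝ (Fin d)

/-- Paths on `(-∞,0]` with values in `ℝ^d`. -/
abbrev Pth (d : ℕ) := PathDom → Eucl d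

def zeroPt : PathDom := ⟨0, Set.self_mem_Iic⟩

/-- The sup norm `|x|_C`. -/
def normC {d : ℕ} (x : Pth d) : ℝ := ⨆ θ : PathDom, ‖x θ‖

/-- The shifted path `x_h`. -/
def shift {d : ℕ} (x : Pth d) (h : ℝ) : Pth d := fun θ =>
  if hθ : -h ≤ θ.1 then x zeroPt
  else x ⟨θ.1 + h, Set.mem_Iic.mpr (by push_neg at hθ; linarith)⟩

/-- The vertical perturbation `x + v · 1_{{0}}`. -/
def vpert {d : ℕ} (x : Pth d) (v : Eucl d) : Pth d := fun θ =>
  if θ.1 = 0 then x θ + v else x θ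

/-- Càdlàg: right-continuous with left limits. -/
def IsCadlag {d : ℕ} (x : Pth d) : Prop :=
  (∀ θ : PathDom, ContinuousWithinAt x {η : PathDom | θ.1 ≤ η.1} θ) ∧
  (∀ θ : PathDom, ∃ L : Eucl d, Tendsto x (nhdsWithin θ {η : PathDom | η.1 < θ.1}) (nhds L))

/-- `𝒟₀`: càdlàg paths vanishing at `-∞`. -/
def D0 (d : ℕ) : Set (Pth d) := {x | IsCadlag x ∧ Tendsto x atBot (nhds 0)}

/-- `𝒞₀`: continuous paths vanishing at `-∞`. -/
def C0 (d : ℕ) : Set (Pth d) := {x | Continuous x ∧ Tendsto x atBot (nhds 0)}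

/-- The metric `d_∞`. -/
def dInfty {d : ℕ} (p q : ℝ × Pth d) : ℝ :=
  if p.1 ≤ q.1 then |q.1 - p.1| + normC (shift p.2 (q.1 - p.1) - q.2)
  else |p.1 - q.1| + normC (shift q.2 (p.1 - q.1) - p.2)

/-- `Λ̂^t = [t,∞) × 𝒟₀`. -/
def LamHat (d : ℕ) (t : ℝ) : Set (ℝ × Pth d) := {p | t ≤ p.1 ∧ p.2 ∈ D0 d}

/-- `Λ^t = [t,∞) × 𝒞₀`. -/
def Lam (d : ℕ) (t : ℝ) : Set (ℝ × Pth d) := {p | t ≤ p.1 ∧ p.2 ∈ C0 d}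

def stdBasis (d : ℕ) (i : Fin d) : Eucl d := EuclideanSpace.single i 1

/-- Horizontal (Dupire) derivative. -/
def HasHorizDerivAt {d : ℕ} (f : ℝ × Pth d → ℝ) (p : ℝ × Pth d) (v : ℝ) : Prop :=
  Tendsto (fun h : ℝ => (f (p.1 + h, shift p.2 h) - f p) / h) (𝓝[>] (0:ℝ)) (𝓝 v)

/-- Vertical (Dupire) derivative in direction `e_i`. -/
def HasVertDerivAt {d : ℕ} (f : ℝ × Pth d → ℝ) (p : ℝ × Pth d) (i : Fin d) (v : ℝ) : Prop :=
  Tendsto (fun h : ℝ => (f (p.1, vpert p.2 (h • stdBasis d i)) - f p) / h) (𝓝[≠] (0:ℝ)) (𝓝 v)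

/-- Continuity on a set w.r.t. `d_∞`. -/
def DContinuousOn {d : ℕ} {E : Type*} [NormedAddCommGroup E]
    (f : ℝ × Pth d → E) (S : Set (ℝ × Pth d)) : Prop :=
  ∀ p ∈ S, ∀ ε > (0:ℝ), ∃ δ > (0:ℝ), ∀ q ∈ S, dInfty p q < δ → ‖f q - f p‖ < ε

/-- Uniform continuity on a set w.r.t. `d_∞`. -/
def DUnifContOn {d : ℕ} {E : Type*} [NormedAddCommGroup E]
    (f : ℝ × Pth d → E) (S : Set (ℝ × Pth d)) : Prop :=
  ∀ ε > (0:ℝ), ∃ δ > (0:ℝ), ∀ p ∈ S, ∀ q ∈ S, dInfty p q < δ → ‖f q - f p‖ < ε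

def BoundedOn {d : ℕ} {E : Type*} [NormedAddCommGroup E]
    (f : ℝ × Pth d → E) (S : Set (ℝ × Pth d)) : Prop :=
  ∃ M : ℝ, ∀ p ∈ S, ‖f p‖ ≤ M

def PolyGrowthOn {d : ℕ} {E : Type*} [NormedAddCommGroup E]
    (f : ℝ × Pth d → E) (S : Set (ℝ × Pth d)) : Prop :=
  ∃ C : ℝ, ∃ k : ℕ, ∀ p ∈ S, ‖f p‖ ≤ C * (1 + |p.1| + normC p.2) ^ k

/-- `f ∈ C_p^{1,2}(Λ̂^t)`, with prescribed pathwise derivatives. -/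
structure IsCp12Hat (d : ℕ) (t : ℝ) (f : ℝ × Pth d → ℝ) (ft : ℝ × Pth d → ℝ)
    (fx : ℝ × Pth d → Eucl d) (fxx : ℝ × Pth d → Matrix (Fin d) (Fin d) ℝ) : Prop where
  horiz : ∀ p ∈ LamHat d t, HasHorizDerivAt f p (ft p)
  vert : ∀ p ∈ LamHat d t, ∀ i, HasVertDerivAt f p i (fx p i)
  vert2 : ∀ p ∈ LamHat d t, ∀ i j, HasVertDerivAt (fun q => fx q j) p i (fxx p i j)
  cont : DContinuousOn f (LamHat d t)
  cont_t : DContinuousOn ft (LamHat d t)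
  cont_x : DContinuousOn fx (LamHat d t)
  cont_xx : ∀ i j, DContinuousOn (fun p => fxx p i j) (LamHat d t)
  growth : PolyGrowthOn f (LamHat d t)
  growth_t : PolyGrowthOn ft (LamHat d t)
  growth_x : PolyGrowthOn fx (LamHat d t)
  growth_xx : ∀ i j, PolyGrowthOn (fun p => fxx p i j) (LamHat d t)

/-- Hilbert–Schmidt norm of a matrix. -/
def hsNorm {m n : ℕ} (A : Matrix (Fin m) (Fin n) ℝ) : ℝ :=
  Real.sqrt (∑ i, ∑ j, (A i j) ^ 2)

/-- The Hamiltonian `H`. -/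
def Ham {d n : ℕ} {U : Type*} (b : Pth d → U → Eucl d)
    (σ' : Pth d → U → Matrix (Fin d) (Fin n) ℝ) (q : Pth d → U → ℝ)
    (x : Pth d) (p : Eucl d) (l : Matrix (Fin d) (Fin d) ℝ) : ℝ :=
  ⨅ u : U, ((inner ℝ p (b x u) : ℝ) + (1/2) * (l * (σ' x u * (σ' x u)ᵀ)).trace + q x u)

/-- Hypothesis 4.2. -/
structure Hyp42 {d n : ℕ} {U : Type*} [PseudoMetricSpace U] (L : ℝ)
    (b : Pth d → U → Eucl d) (σ' : Pth d → U → Matrix (Fin d) (Fin n) ℝ)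
    (q : Pth d → U → ℝ) : Prop where
  pos : 0 < L
  continuous : ∀ x ∈ C0 d, ∀ u : U, ∀ ε > (0:ℝ), ∃ δ > (0:ℝ), ∀ y ∈ C0 d, ∀ u' : U,
    normC (x - y) < δ → dist u u' < δ →
    ‖b x u - b y u'‖ < ε ∧ hsNorm (σ' x u - σ' y u') < ε ∧ |q x u - q y u'| < ε
  bound_b : ∀ x ∈ C0 d, ∀ u : U, ‖b x u‖ ^ 2 ≤ L ^ 2 * (1 + normC x ^ 2)
  bound_σ : ∀ x ∈ C0 d, ∀ u : U, hsNorm (σ' x u) ^ 2 ≤ L ^ 2 * (1 + normC x ^ 2)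
  bound_q : ∀ x ∈ C0 d, ∀ u : U, (q x u) ^ 2 ≤ L ^ 2 * (1 + normC x ^ 2)
  lip_b : ∀ x ∈ C0 d, ∀ y ∈ C0 d, ∀ u : U, ‖b x u - b y u‖ ≤ L * normC (x - y)
  lip_σ : ∀ x ∈ C0 d, ∀ y ∈ C0 d, ∀ u : U, hsNorm (σ' x u - σ' y u) ≤ L * normC (x - y)
  lip_q : ∀ x ∈ C0 d, ∀ y ∈ C0 d, ∀ u : U, |q x u - q y u| ≤ L * normC (x - y)

/-- Viscosity subsolution of `-λ w + ∂_t w + H(x, ∂_x w, ∂_{xx} w) = 0`. -/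
def IsViscSubsol {d n : ℕ} {U : Type*} (lam : ℝ) (b : Pth d → U → Eucl d)
    (σ' : Pth d → U → Matrix (Fin d) (Fin n) ℝ) (q : Pth d → U → ℝ)
    (w : Pth d → ℝ) : Prop :=
  ∀ s : ℝ, 0 ≤ s → ∀ x ∈ C0 d,
    ∀ (φ φt : ℝ × Pth d → ℝ) (φx : ℝ × Pth d → Eucl d)
      (φxx : ℝ × Pth d → Matrix (Fin d) (Fin d) ℝ),
      IsCp12Hat d s φ φt φx φxx →
      w x - φ (s, x) = 0 →
      (∀ p ∈ Lam d s, w p.2 - φ p ≤ 0) →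
      0 ≤ -lam * w x + φt (s, x) + Ham b σ' q x (φx (s, x)) (φxx (s, x))

/-- Viscosity supersolution. -/
def IsViscSupersol {d n : ℕ} {U : Type*} (lam : ℝ) (b : Pth d → U → Eucl d)
    (σ' : Pth d → U → Matrix (Fin d) (Fin n) ℝ) (q : Pth d → U → ℝ)
    (w : Pth d → ℝ) : Prop :=
  ∀ s : ℝ, 0 ≤ s → ∀ x ∈ C0 d,
    ∀ (φ φt : ℝ × Pth d → ℝ) (φx : ℝ × Pth d → Eucl d)
      (φxx : ℝ × Pth d → Matrix (Fin d) (Fin d) ℝ),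
      IsCp12Hat d s φ φt φx φxx →
      w x + φ (s, x) = 0 →
      (∀ p ∈ Lam d s, 0 ≤ w p.2 + φ p) →
      -lam * w x - φt (s, x) + Ham b σ' q x (-φx (s, x)) (-φxx (s, x)) ≤ 0


/-- The two-argument functional `S_m(t,x,s,y)`. -/
def SmP {d : ℕ} (m : ℕ) (p q : ℝ × Pth d) : ℝ :=
  if normC (shift p.2 (max (q.1 - p.1) 0) - shift q.2 (max (p.1 - q.1) 0)) = 0 then 0
  else (normC (shift p.2 (max (q.1 - p.1) 0) - shift q.2 (max (p.1 - q.1) 0)) ^ (2*m)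
        - ‖p.2 zeroPt - q.2 zeroPt‖ ^ (2*m)) ^ 3
       / normC (shift p.2 (max (q.1 - p.1) 0) - shift q.2 (max (p.1 - q.1) 0)) ^ (4*m)

/-- `Υ^{m,M}(t,x,s,y)`. -/
def UpsP {d : ℕ} (m : ℕ) (M : ℝ) (p q : ℝ × Pth d) : ℝ :=
  SmP m p q + M * ‖p.2 zeroPt - q.2 zeroPt‖ ^ (2*m)

/-- `Ῡ^{m,M}(t,x,s,y) = Υ^{m,M}(t,x,s,y) + |s-t|²`. -/
def UpsBarP {d : ℕ} (m : ℕ) (M : ℝ) (p q : ℝ × Pth d) : ℝ :=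
  UpsP m M p q + (q.1 - p.1) ^ 2

/-- The single-path functional `Υ^{m,M}(x)`. -/
def Ups0 {d : ℕ} (m : ℕ) (M : ℝ) (x : Pth d) : ℝ :=
  (if normC x = 0 then 0
   else (normC x ^ (2*m) - ‖x zeroPt‖ ^ (2*m)) ^ 3 / normC x ^ (4*m))
  + M * ‖x zeroPt‖ ^ (2*m)

/-- `w̃^{t̂}` before taking the upper semicontinuous envelope:
the sup of `w(t,ξ)` over `ξ ∈ 𝒞₀` with `ξ(0) = x₀`. -/
def sliceSup {d : ℕ} (w : ℝ × Pth d → ℝ) (t : ℝ) (x0 : Eucl d) : ℝ :=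
  sSup {r : ℝ | ∃ ξ ∈ C0 d, ξ zeroPt = x0 ∧ r = w (t, ξ)}

def tildeW {d : ℕ} (w : ℝ × Pth d → ℝ) (tHat : ℝ) : ℝ × Eucl d → ℝ := fun p =>
  if tHat ≤ p.1 then sliceSup w p.1 p.2
  else sliceSup w tHat p.2 - Real.sqrt (tHat - p.1)

/-- Upper semicontinuous envelope. -/
def uscEnv {d : ℕ} (g : ℝ × Eucl d → ℝ) : ℝ × Eucl d → ℝ := fun p =>
  Filter.limsup g (nhds p)

/-- A local modulus of continuity. -/
structure LocalModulus (ρ : ℝ → ℝ → ℝ) : Prop where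
  cont : Continuous fun p : ℝ × ℝ => ρ p.1 p.2
  nonneg : ∀ t r, 0 ≤ t → 0 ≤ r → 0 ≤ ρ t r
  zero : ∀ r, 0 ≤ r → ρ 0 r = 0
  subadd : ∀ t s r, 0 ≤ t → 0 ≤ s → 0 ≤ r → ρ (t + s) r ≤ ρ t r + ρ s r
  mono : ∀ t r r', 0 ≤ t → 0 ≤ r → r ≤ r' → ρ t r ≤ ρ t r'

/-- Upper semicontinuity on a set w.r.t. `d_∞`. -/
def DUSCOn {d : ℕ} (w : ℝ × Pth d → ℝ) (S : Set (ℝ × Pth d)) : Prop :=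
  ∀ p ∈ S, ∀ ε > (0:ℝ), ∃ δ > (0:ℝ), ∀ q ∈ S, dInfty p q < δ → w q < w p + ε

def BddAboveOn {d : ℕ} (w : ℝ × Pth d → ℝ) (S : Set (ℝ × Pth d)) : Prop :=
  ∃ M : ℝ, ∀ p ∈ S, w p ≤ M

/-- `limsup_{t+|x|_C → ∞} w(t,x)/(t+|x|_C) < 0` on `Λ`. -/
def NegLimsupAtInfty {d : ℕ} (w : ℝ × Pth d → ℝ) : Prop :=
  ∃ c < (0:ℝ), ∃ R : ℝ, ∀ p ∈ Lam d 0, R ≤ p.1 + normC p.2 →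
    w p ≤ c * (p.1 + normC p.2)

/-- `φ ∈ C^{1,2}([0,∞) × ℝ^d)` with prescribed derivatives. -/
structure IsC12Fin (d : ℕ) (φ φt : ℝ × Eucl d → ℝ) (φx : ℝ × Eucl d → Eucl d)
    (φxx : ℝ × Eucl d → Matrix (Fin d) (Fin d) ℝ) : Prop where
  ht : ∀ p : ℝ × Eucl d, HasDerivAt (fun s => φ (s, p.2)) (φt p) p.1
  hx : ∀ p : ℝ × Eucl d, HasGradientAt (fun y => φ (p.1, y)) (φx p) p.2
  hxx : ∀ p : ℝ × Eucl d, ∀ i j,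
    HasDerivAt (fun h : ℝ => φx (p.1, p.2 + h • stdBasis d j) i) (φxx p i j) 0
  cont : Continuous φ
  cont_t : Continuous φt
  cont_x : Continuous φx
  cont_xx : ∀ i j, Continuous fun p => φxx p i j

/-- The class `Φ(t̂, x̂₀, T)` of Definition 6.1. -/
def PhiClass (d : ℕ) (tHat : ℝ) (xHat0 : Eucl d) (T : ℝ) (f : ℝ × Eucl d → ℝ) : Prop :=
  ∃ r > (0:ℝ), ∀ L > (0:ℝ),
    ∀ (φ φt : ℝ × Eucl d → ℝ) (φx : ℝ × Eucl d → Eucl d)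
      (φxx : ℝ × Eucl d → Matrix (Fin d) (Fin d) ℝ),
      IsC12Fin d φ φt φx φxx →
      ∀ t : ℝ, ∀ x0 : Eucl d, 0 < t → t < T →
        (∀ s : ℝ, ∀ y : Eucl d, 0 ≤ s → s ≤ T → f (s, y) - φ (s, y) ≤ f (t, x0) - φ (t, x0)) →
        ∃ C > (0:ℝ),
          (|t - tHat| + ‖x0 - xHat0‖ < r →
           |f (t, x0)| + ‖φx (t, x0)‖ + hsNorm (φxx (t, x0)) ≤ L →
           C ≤ φt (t, x0))

/-- Operator norm of a square matrix, via the associated Euclidean linear map. -/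
def matOpNorm {ι : Type*} [Fintype ι] [DecidableEq ι] (A : Matrix ι ι ℝ) : ℝ :=
  ‖LinearMap.toContinuousLinearMap (Matrix.toEuclideanLin A)‖

/-- The second-derivative matrix of `φ : ℝ^d × ℝ^d → ℝ` at a point, as a
`(2d) × (2d)` matrix indexed by `Fin d ⊕ Fin d`. -/
def hess2 {d : ℕ} (φ : Eucl d × Eucl d → ℝ) (z : Eucl d × Eucl d) :
    Matrix (Fin d ⊕ Fin d) (Fin d ⊕ Fin d) ℝ := fun k l =>
  iteratedFDeriv ℝ 2 φ z
    ![Sum.elim (fun i => ((stdBasis d i, 0) : Eucl d × Eucl d))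
        (fun j => ((0, stdBasis d j) : Eucl d × Eucl d)) k,
      Sum.elim (fun i => ((stdBasis d i, 0) : Eucl d × Eucl d))
        (fun j => ((0, stdBasis d j) : Eucl d × Eucl d)) l]

/-- Hessian matrix of `φ : ℝ^d → ℝ`. -/
def hess1 {d : ℕ} (φ : Eucl d → ℝ) (z : Eucl d) : Matrix (Fin d) (Fin d) ℝ := fun i j =>
  iteratedFDeriv ℝ 2 φ z ![stdBasis d i, stdBasis d j]


/-- The path `x - a_{t-t̂}` appearing in `S_m(t,x,t̂,a)` (for `t ≥ t̂`). -/
def zRel {d : ℕ} (tHat : ℝ) (a : Pth d) (p : ℝ × Pth d) : Pth d :=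
  shift p.2 (max (tHat - p.1) 0) - shift a (max (p.1 - tHat) 0)

/-!
At a common time `d_∞` is the sup-norm distance, which gives one direction. For the other,
`|x - y|_C ≤ d_∞((t,x),(s,y)) + |x - x_{|s-t|}|_C`, and the last term is small for small time
lags because a path vanishing at `-∞` is uniformly continuous.
-/

section

variable {d : ℕ}

instance : CompactIccSpace PathDom :=
  ⟨fun {a b} => (isClosed_Iic (a := (0 : ℝ))).isClosedEmbedding_subtypeVal.isCompact_preimage
    (isCompact_Icc (a := a.1) (b := b.1))⟩

/-- On `(-∞,0]` the cocompact filter is below `atBot`, so a path of `𝒞₀` vanishes at infinity. -/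
def zeroAtInftyOfMemC0 {x : Pth d} (hx : x ∈ C0 d) : ZeroAtInftyContinuousMap PathDom (Eucl d) :=
  ⟨⟨x, hx.1⟩, hx.2.mono_left cocompact_le_atBot⟩

theorem uniformContinuous_of_mem_C0 {x : Pth d} (hx : x ∈ C0 d) : UniformContinuous x :=
  ZeroAtInftyContinuousMap.uniformContinuous (zeroAtInftyOfMemC0 hx)

theorem bddAbove_norm_of_mem_C0 {x : Pth d} (hx : x ∈ C0 d) :
    BddAbove (Set.range fun θ => ‖x θ‖) := by
  obtain ⟨C, hC⟩ := isBounded_iff_forall_norm_le.mp (zeroAtInftyOfMemC0 hx).isBounded_range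
  exact ⟨C, Set.forall_mem_range.mpr fun θ => hC _ (Set.mem_range_self θ)⟩

theorem bddAbove_norm_sub {x y : Pth d} (hx : BddAbove (Set.range fun θ => ‖x θ‖))
    (hy : BddAbove (Set.range fun θ => ‖y θ‖)) :
    BddAbove (Set.range fun θ => ‖(x - y) θ‖) := by
  obtain ⟨A, hA⟩ := hx
  obtain ⟨B, hB⟩ := hy
  refine ⟨A + B, Set.forall_mem_range.mpr fun θ => (norm_sub_le _ _).trans ?_⟩
  exact add_le_add (hA (Set.mem_range_self θ)) (hB (Set.mem_range_self θ))

theorem normC_nonneg (x : Pth d) : 0 ≤ normC x :=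
  Real.iSup_nonneg fun _ => norm_nonneg _

theorem normC_le {x : Pth d} {a : ℝ} (h : ∀ θ, ‖x θ‖ ≤ a) : normC x ≤ a :=
  ciSup_le h

theorem normC_sub_comm (x y : Pth d) : normC (x - y) = normC (y - x) := by
  simp only [normC, Pi.sub_apply, norm_sub_rev]

theorem normC_sub_le_add {x y z : Pth d} (hx : BddAbove (Set.range fun θ => ‖x θ‖))
    (hy : BddAbove (Set.range fun θ => ‖y θ‖)) (hz : BddAbove (Set.range fun θ => ‖z θ‖)) :
    normC (x - z) ≤ normC (x - y) + normC (y - z) :=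
  normC_le fun θ => (norm_sub_le_norm_sub_add_norm_sub _ (y θ) _).trans <|
    add_le_add (le_ciSup (bddAbove_norm_sub hx hy) θ) (le_ciSup (bddAbove_norm_sub hy hz) θ)

theorem eq_zeroPt_of_nonneg {θ : PathDom} (hθ : 0 ≤ θ.1) : θ = zeroPt :=
  Subtype.ext (le_antisymm θ.2 hθ)

theorem shift_zero (x : Pth d) : shift x 0 = x := by
  funext θ
  unfold shift
  split_ifs with hθ
  · exact congrArg x (eq_zeroPt_of_nonneg (by simpa using hθ)).symm
  · exact congrArg x (Subtype.ext (add_zero θ.1))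

theorem shift_sub (x y : Pth d) (h : ℝ) : shift (x - y) h = shift x h - shift y h := by
  funext θ
  simp only [shift, Pi.sub_apply]
  split_ifs <;> rfl

theorem exists_dist_le_shift_eq (x : Pth d) {h : ℝ} (hh : 0 ≤ h) (θ : PathDom) :
    ∃ η : PathDom, dist θ η ≤ h ∧ shift x h θ = x η := by
  unfold shift
  split_ifs with hθ
  · refine ⟨zeroPt, ?_, rfl⟩
    rw [Subtype.dist_eq, Real.dist_eq, abs_le]
    exact ⟨by simpa [zeroPt] using hθ, by simpa [zeroPt] using θ.2.trans hh⟩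
  · refine ⟨_, ?_, rfl⟩
    rw [Subtype.dist_eq, Real.dist_eq, sub_add_cancel_left, abs_neg, abs_of_nonneg hh]

theorem range_shift (x : Pth d) {h : ℝ} (hh : 0 ≤ h) : Set.range (shift x h) = Set.range x := by
  refine (Set.range_subset_iff.mpr fun θ => ?_).antisymm (Set.range_subset_iff.mpr fun η => ?_)
  · obtain ⟨η, -, hη⟩ := exists_dist_le_shift_eq x hh θ
    exact ⟨η, hη.symm⟩
  · have hη : η.1 - h ≤ 0 := by linarith [Set.mem_Iic.mp η.2]
    refine ⟨⟨η.1 - h, hη⟩, ?_⟩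
    unfold shift
    split_ifs with hθ
    · exact congrArg x (eq_zeroPt_of_nonneg (by simpa using hθ)).symm
    · exact congrArg x (Subtype.ext (sub_add_cancel _ _))

theorem normC_shift (x : Pth d) {h : ℝ} (hh : 0 ≤ h) : normC (shift x h) = normC x := by
  change sSup (Set.range (norm ∘ shift x h)) = sSup (Set.range (norm ∘ x))
  rw [Set.range_comp, Set.range_comp, range_shift x hh]

theorem bddAbove_norm_shift {x : Pth d} (hx : BddAbove (Set.range fun θ => ‖x θ‖)) {h : ℝ}
    (hh : 0 ≤ h) : BddAbove (Set.range fun θ => ‖shift x h θ‖) := by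
  change BddAbove (Set.range (norm ∘ shift x h))
  rwa [Set.range_comp, range_shift x hh, ← Set.range_comp]

theorem exists_normC_sub_shift_le {x : Pth d} (hx : UniformContinuous x) {ε : ℝ} (hε : 0 < ε) :
    ∃ δ > 0, ∀ h, 0 ≤ h → h < δ → normC (x - shift x h) ≤ ε := by
  obtain ⟨δ, hδ, hxδ⟩ := Metric.uniformContinuous_iff.mp hx ε hε
  refine ⟨δ, hδ, fun h hh hhδ => normC_le fun θ => ?_⟩
  obtain ⟨η, hθη, hη⟩ := exists_dist_le_shift_eq x hh θ
  rw [Pi.sub_apply, hη, ← dist_eq_norm]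
  exact (hxδ (hθη.trans_lt hhδ)).le

theorem abs_sub_le_dInfty (p q : ℝ × Pth d) : |q.1 - p.1| ≤ dInfty p q := by
  unfold dInfty
  split_ifs
  · exact le_add_of_nonneg_right (normC_nonneg _)
  · exact abs_sub_comm q.1 p.1 ▸ le_add_of_nonneg_right (normC_nonneg _)

/-- If `q` comes first, `q.2 - p.2` is compared with its shift, which has the same sup norm. -/
theorem normC_sub_le_dInfty_add {p q : ℝ × Pth d}
    (hp : BddAbove (Set.range fun θ => ‖p.2 θ‖)) (hq : BddAbove (Set.range fun θ => ‖q.2 θ‖)) :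
    normC (p.2 - q.2) ≤ dInfty p q + normC (p.2 - shift p.2 |q.1 - p.1|) := by
  have hp' := bddAbove_norm_shift hp (abs_nonneg (q.1 - p.1))
  unfold dInfty
  split_ifs with hpq
  · rw [abs_of_nonneg (sub_nonneg.mpr hpq)] at hp' ⊢
    linarith [normC_sub_le_add hp hp' hq]
  · rw [abs_sub_comm q.1 p.1, abs_of_pos (sub_pos.mpr (not_le.mp hpq))] at hp' ⊢
    have hq' := bddAbove_norm_shift hq (sub_pos.mpr (not_le.mp hpq)).le
    calc normC (p.2 - q.2) = normC (shift q.2 (p.1 - q.1) - shift p.2 (p.1 - q.1)) := by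
          rw [normC_sub_comm, ← shift_sub, normC_shift _ (sub_pos.mpr (not_le.mp hpq)).le]
      _ ≤ _ := normC_sub_le_add hq' hp hp'
      _ ≤ _ := by linarith [abs_nonneg (p.1 - q.1)]

theorem dInfty_same_time (t : ℝ) (x y : Pth d) : dInfty (t, x) (t, y) = normC (x - y) := by
  simp [dInfty, shift_zero]

end

/-- Lemma 2.5: `f : 𝒞₀ → ℝ` is `|·|_C`-continuous iff the
functional `f̂(t,x) := f(x)` is `d_∞`-continuous on `Λ`. -/
theorem continuity_iff_pathfunctional_continuity {d : ℕ} (f : Pth d → ℝ) :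
    (∀ x ∈ C0 d, ∀ ε > (0:ℝ), ∃ δ > (0:ℝ), ∀ y ∈ C0 d,
        normC (x - y) < δ → |f y - f x| < ε) ↔
    (∀ p ∈ Lam d 0, ∀ ε > (0:ℝ), ∃ δ > (0:ℝ), ∀ q ∈ Lam d 0,
        dInfty p q < δ → |f q.2 - f p.2| < ε) := by
  constructor
  · rintro hf p ⟨-, hp⟩ ε hε
    obtain ⟨δ, hδ, hfδ⟩ := hf p.2 hp ε hε
    obtain ⟨η, hη, hshift⟩ :=
      exists_normC_sub_shift_le (uniformContinuous_of_mem_C0 hp) (half_pos hδ)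
    refine ⟨min η (δ / 2), by positivity, fun q ⟨_, hq⟩ hpq => hfδ q.2 hq ?_⟩
    have hlag := hshift _ (abs_nonneg _)
      ((abs_sub_le_dInfty p q).trans_lt (hpq.trans_le (min_le_left _ _)))
    linarith [normC_sub_le_dInfty_add (bddAbove_norm_of_mem_C0 hp) (bddAbove_norm_of_mem_C0 hq),
      min_le_right η (δ / 2)]
  · intro hf x hx ε hε
    obtain ⟨δ, hδ, hfδ⟩ := hf (0, x) ⟨le_rfl, hx⟩ ε hε
    exact ⟨δ, hδ, fun y hy hxy => hfδ (0, y) ⟨le_rfl, hy⟩ (by rwa [dInfty_same_time])⟩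

end PathHJB
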